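/- arXiv:math/0410378 — 2 statements merged into one kernel-verified Lean document; each statement's English description precedes it below -/
import Mathlib

section
/- Let (X, ≤) be a finite poset with the Alexandrov topology of increasing subsets, and let ℱ be a sheaf of abelian groups on X. Then ℱ is flabby if and only if for every x ∈ X the restriction map ℱ(X̄_x) → ℱ(X_x) is surjective, where X̄_x = {y : x ≤ y} and X_x = X̄_x ∖ {x}. -/
/-!
Restricting a sheaf from `V` to an open `U ⊆ V` factors through the opens in between, so it
suffices to enlarge `U` one point at a time. If `x` is maximal in `V \ U`, then
`U ∩ X̄_x = X_x`, so a section over `U` restricts to `X_x`, lifts to `X̄_x` by hypothesis, and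
glues with the original section to a section over `U ∪ X̄_x`. Since `X` is finite, finitely many
such steps reach `V`.
-/

open TopologicalSpace CategoryTheory

def upTop (X : Type*) [Preorder X] : TopologicalSpace X where
  IsOpen s := IsUpperSet s
  isOpen_univ := isUpperSet_univ
  isOpen_inter _ _ hs ht := hs.inter ht
  isOpen_sUnion _ h := isUpperSet_sUnion h

def PosetTop (X : Type u) [Preorder X] : TopCat.{u} :=
  @TopCat.of X (upTop X)

def openIci {X : Type u} [Preorder X] (x : X) : Opens (PosetTop X) :=
  ⟨show Set X from Set.Ici x, isUpperSet_Ici x⟩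

def openIoi {X : Type u} [Preorder X] (x : X) : Opens (PosetTop X) :=
  ⟨show Set X from Set.Ioi x, isUpperSet_Ioi x⟩

universe u v

namespace TopCat.Sheaf

variable {Y : TopCat.{u}} (F : Sheaf AddCommGrpCat.{v} Y)

theorem surjective_map_homOfLE_trans {U W V : Opens Y} (hUW : U ≤ W) (hWV : W ≤ V)
    (hVW : Function.Surjective (F.obj.map (homOfLE hWV).op))
    (hWU : Function.Surjective (F.obj.map (homOfLE hUW).op)) :
    Function.Surjective (F.obj.map (homOfLE (hUW.trans hWV)).op) := by
  have : (homOfLE (hUW.trans hWV)).op = (homOfLE hWV).op ≫ (homOfLE hUW).op := rfl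
  rw [this, Functor.map_comp]
  exact hWU.comp hVW

theorem exists_gluing_sup {U V : Opens Y} (s : F.obj.obj (Opposite.op U))
    (t : F.obj.obj (Opposite.op V))
    (hst : F.obj.map (homOfLE (inf_le_left : U ⊓ V ≤ U)).op s
      = F.obj.map (homOfLE (inf_le_right : U ⊓ V ≤ V)).op t) :
    ∃ r : F.obj.obj (Opposite.op (U ⊔ V)),
      F.obj.map (homOfLE le_sup_left).op r = s ∧ F.obj.map (homOfLE le_sup_right).op r = t := by
  have := (IsPullback.of_isLimit (F.isLimitPullbackCone U V)).map
    (CategoryTheory.forget AddCommGrpCat)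
  exact Limits.Types.exists_of_isPullback this s t hst

theorem surjective_map_le_sup_left {U W K : Opens Y} (hK : U ⊓ W = K) (hKW : K ≤ W)
    (hsurj : Function.Surjective (F.obj.map (homOfLE hKW).op)) :
    Function.Surjective (F.obj.map (homOfLE (le_sup_left : U ≤ U ⊔ W)).op) := by
  subst hK
  intro s
  obtain ⟨t, ht⟩ := hsurj (F.obj.map (homOfLE inf_le_left).op s)
  obtain ⟨r, hr, -⟩ := F.exists_gluing_sup s t ht.symm
  exact ⟨r, hr⟩

end TopCat.Sheaf

section PosetTop

variable {X : Type u} [Preorder X] [Finite X]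

theorem exists_inf_openIci_eq_openIoi {U V : Opens (PosetTop X)} (hUV : U < V) :
    ∃ x : X, x ∈ V ∧ x ∉ U ∧ U ⊓ openIci x = openIoi x := by
  obtain ⟨x, ⟨hxV, hxU⟩, hmax⟩ := (Set.toFinite (show Set X from V.1 \ U.1)).exists_maximal
    (Set.sdiff_nonempty.mpr (SetLike.coe_subset_coe.not.mpr hUV.not_ge))
  refine ⟨x, hxV, hxU, le_antisymm ?_ fun y (hxy : x < y) => ⟨?_, le_of_lt hxy⟩⟩
  · rintro y ⟨hyU, hxy : x ≤ y⟩
    exact lt_of_le_not_ge hxy fun hyx => hxU (U.2 hyx hyU)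
  · by_contra hyU
    exact hxy.not_ge (hmax ⟨V.2 (le_of_lt hxy) hxV, hyU⟩ (le_of_lt hxy))

theorem surjective_map_of_surjective_openIoi (F : TopCat.Sheaf AddCommGrpCat.{v} (PosetTop X))
    (hF : ∀ x : X, Function.Surjective
      (F.obj.map (homOfLE (show openIoi x ≤ openIci x from fun _ hy => le_of_lt hy)).op))
    {U V : Opens (PosetTop X)} (hUV : U ≤ V) :
    Function.Surjective (F.obj.map (homOfLE hUV).op) := by
  have : Finite (PosetTop X) := ‹Finite X›
  induction U using WellFoundedGT.induction with | _ U ih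
  rcases hUV.eq_or_lt with rfl | hUV
  · rw [Subsingleton.elim (homOfLE hUV) (𝟙 U), op_id, F.obj.map_id]
    exact Function.surjective_id
  obtain ⟨x, hxV, hxU, hUx⟩ := exists_inf_openIci_eq_openIoi hUV
  have hU'V : U ⊔ openIci x ≤ V := sup_le hUV.le fun y hxy => V.2 hxy hxV
  have hUU' : U < U ⊔ openIci x := left_lt_sup.mpr fun h => hxU (h le_rfl)
  exact F.surjective_map_homOfLE_trans le_sup_left hU'V (ih _ hUU' hU'V)
    (F.surjective_map_le_sup_left hUx _ (hF x))

end PosetTop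

/-- **Flabbiness criterion on a finite poset space** (Lemma 4 of the paper):
a sheaf of abelian groups `ℱ` on a finite poset `X` (with the Alexandrov topology)
is flabby iff for every `x ∈ X` the restriction `ℱ(X̄_x) → ℱ(X_x)` is surjective. -/
theorem stmt4 (X : Type) [PartialOrder X] [Finite X]
    (F : TopCat.Sheaf AddCommGrpCat (PosetTop X)) :
    (∀ (U V : Opens (PosetTop X)) (h : U ≤ V),
        Function.Surjective (F.val.map (homOfLE h).op)) ↔
    (∀ x : X, Function.Surjective
        (F.val.map (homOfLE (show openIoi x ≤ openIci x from fun y hy => le_of_lt hy)).op)) :=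
  ⟨fun hF _ => hF _ _ _, fun hF _ _ hUV => surjective_map_of_surjective_openIoi F hF hUV⟩
end

section
/- Let Δ be a regular (smooth) fan in ℝ^n and σ ∈ Δ a cone of dimension n generated by a basis u₁,…,u_n of the lattice N. Let 𝒜 be the sheaf of rings on the fan space of σ̄ (faces of σ with reverse-inclusion order) with stalk 𝒜_τ = ℤ[M/τ^⊥] at each face τ, and restriction maps induced by inclusions of faces. Then the restriction map 𝒜_σ = ℤ[M] → 𝒜(∂σ) is surjective, where ∂σ denotes the open set of proper faces of σ; explicitly, for every compatible family (a_τ)_{τ ⊊ σ} with a_τ ∈ ℤ[M/τ^⊥], the element a = Σ_{τ ⊊ σ} (−1)^{n−dim τ+1} φ_τ(a_τ) of ℤ[M] (where φ_τ is the splitting of the projection ℤ[M] → ℤ[M/τ^⊥] determined by the dual basis) restricts to a_ρ on every proper face ρ. -/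
noncomputable section

variable {n : ℕ}

/-- Restriction of functions along `τ₁ ⊆ τ₂`, as an additive group homomorphism
`(M/τ₂^⊥ ≅ (↥τ₂ → ℤ)) → (M/τ₁^⊥ ≅ (↥τ₁ → ℤ))`. -/
def resAdd {τ₁ τ₂ : Finset (Fin n)} (h : τ₁ ⊆ τ₂) :
    (({x // x ∈ τ₂} → ℤ) →+ ({x // x ∈ τ₁} → ℤ)) where
  toFun f i := f ⟨i.1, h i.2⟩
  map_zero' := rfl
  map_add' _ _ := rfl

/-- Restriction of functions from `M ≅ (Fin n → ℤ)` to `M/ρ^⊥ ≅ (↥ρ → ℤ)`. -/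
def resAddFull (ρ : Finset (Fin n)) : ((Fin n → ℤ) →+ ({x // x ∈ ρ} → ℤ)) where
  toFun f i := f i.1
  map_zero' := rfl
  map_add' _ _ := rfl

/-- Extension of functions by zero, the section of `resAddFull` given by the dual basis. -/
def extAdd (τ : Finset (Fin n)) : (({x // x ∈ τ} → ℤ) →+ (Fin n → ℤ)) where
  toFun f i := if h : i ∈ τ then f ⟨i, h⟩ else 0
  map_zero' := by funext i; by_cases h : i ∈ τ <;> simp [h]
  map_add' a b := by funext i; by_cases h : i ∈ τ <;> simp [h]

/-- Identify the faces of the smooth cone `σ = pos(u₁,…,u_n)` with subsets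
`τ ⊆ {1,…,n}`; then `RT_τ = ℤ[M/τ^⊥]` is the group algebra `ℤ[↥τ → ℤ]`, and the
restriction maps are induced by restriction of functions. -/
def resRing {τ₁ τ₂ : Finset (Fin n)} (h : τ₁ ⊆ τ₂) :
    AddMonoidAlgebra ℤ ({x // x ∈ τ₂} → ℤ) →+* AddMonoidAlgebra ℤ ({x // x ∈ τ₁} → ℤ) :=
  AddMonoidAlgebra.mapDomainRingHom ℤ (resAdd h)

/-- Restriction `RT = ℤ[M] → RT_ρ = ℤ[M/ρ^⊥]` from the full cone `σ` to a face `ρ`. -/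
def resFull (ρ : Finset (Fin n)) :
    AddMonoidAlgebra ℤ (Fin n → ℤ) →+* AddMonoidAlgebra ℤ ({x // x ∈ ρ} → ℤ) :=
  AddMonoidAlgebra.mapDomainRingHom ℤ (resAddFull ρ)

/-- The section `φ_τ : ℤ[M/τ^⊥] → ℤ[M]` of the projection, determined by the dual
basis (extension of functions by zero). -/
def phiSec (τ : Finset (Fin n)) :
    AddMonoidAlgebra ℤ ({x // x ∈ τ} → ℤ) →+* AddMonoidAlgebra ℤ (Fin n → ℤ) :=
  AddMonoidAlgebra.mapDomainRingHom ℤ (extAdd τ)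

/-- Extension of functions by zero into a face `ρ` (no subset hypothesis needed). -/
def extInto (ρ π : Finset (Fin n)) : (({x // x ∈ π} → ℤ) →+ ({x // x ∈ ρ} → ℤ)) where
  toFun f i := if h : i.1 ∈ π then f ⟨i.1, h⟩ else 0
  map_zero' := by funext i; by_cases h : i.1 ∈ π <;> simp [h]
  map_add' a b := by funext i; by_cases h : i.1 ∈ π <;> simp [h]

lemma resFull_phiSec (ρ τ : Finset (Fin n)) (x : AddMonoidAlgebra ℤ ({x // x ∈ τ} → ℤ)) :
    resFull ρ (phiSec τ x) =
      AddMonoidAlgebra.mapDomainRingHom ℤ (extInto ρ τ) x := by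
  show AddMonoidAlgebra.mapDomain (⇑(resAddFull ρ)) (AddMonoidAlgebra.mapDomain (⇑(extAdd τ)) x)
      = AddMonoidAlgebra.mapDomain (⇑(extInto ρ τ)) x
  simp only [AddMonoidAlgebra.mapDomain]
  rw [← Finsupp.mapDomain_comp]
  have h : ⇑(resAddFull ρ) ∘ ⇑(extAdd τ) = ⇑(extInto ρ τ) := by
    funext f i; rfl
  rw [h]

lemma extInto_factor (ρ τ : Finset (Fin n)) :
    ⇑(extInto ρ τ) = (extInto ρ (τ ∩ ρ)) ∘ (resAdd (Finset.inter_subset_left (s₂ := ρ))) := by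
  funext f i
  simp only [extInto, resAdd, AddMonoidHom.coe_mk, ZeroHom.coe_mk, Function.comp_apply,
    Finset.mem_inter]
  by_cases h : i.1 ∈ τ
  · rw [dif_pos h, dif_pos ⟨h, i.2⟩]
  · rw [dif_neg h, dif_neg (fun hh => h hh.1)]

lemma mapDomain_extInto_self (ρ : Finset (Fin n))
    (x : AddMonoidAlgebra ℤ ({x // x ∈ ρ} → ℤ)) :
    AddMonoidAlgebra.mapDomainRingHom ℤ (extInto ρ ρ) x = x := by
  have h : ⇑(extInto ρ ρ) = id := by
    funext f i
    simp only [extInto, AddMonoidHom.coe_mk, ZeroHom.coe_mk, id_eq]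
    rw [dif_pos i.2]
  show AddMonoidAlgebra.mapDomain (⇑(extInto ρ ρ)) x = x
  simp only [AddMonoidAlgebra.mapDomain]
  rw [h, Finsupp.mapDomain_id]

lemma sign_shift {k m : ℕ} (h : k ≤ m) : (-1 : ℤ) ^ (m - k + 1) = (-1) ^ (m + k + 1) := by
  have h2 : m + k + 1 = (m - k + 1) + 2 * k := by omega
  conv_rhs => rw [h2, pow_add, pow_mul]
  norm_num

/-- Key counting lemma: the signed count of proper faces `τ` with `τ ∩ ρ = π`. -/
lemma sign_count (ρ π : Finset (Fin n)) (hρ : ρ ≠ Finset.univ) (hπ : π ⊆ ρ) :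
    (∑ τ ∈ (Finset.univ.filter (fun τ : Finset (Fin n) => τ ≠ Finset.univ)).filter
        (fun τ => τ ∩ ρ = π), ((-1 : ℤ) ^ (n - τ.card + 1)))
      = if π = ρ then 1 else 0 := by
  classical
  have hcompl : (ρᶜ : Finset (Fin n)).Nonempty := by
    rw [Finset.nonempty_iff_ne_empty]
    intro h
    exact hρ (by simpa [Finset.compl_eq_empty_iff] using h)
  -- the full (unrestricted) signed count is zero
  have hfull : (∑ τ ∈ Finset.univ.filter (fun τ : Finset (Fin n) => τ ∩ ρ = π),
      ((-1 : ℤ) ^ (n - τ.card + 1))) = 0 := by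
    rw [Finset.sum_nbij' (i := fun τ => τ \ ρ) (j := fun S => π ∪ S)
      (t := (ρᶜ : Finset (Fin n)).powerset)
      (g := fun S => ((-1 : ℤ) ^ (n - (π ∪ S).card + 1)))]
    · have : ∀ S ∈ (ρᶜ : Finset (Fin n)).powerset,
          ((-1 : ℤ) ^ (n - (π ∪ S).card + 1)) = ((-1 : ℤ) ^ (n + π.card + 1)) * (-1) ^ S.card := by
        intro S hS
        have hdisj : Disjoint π S := by
          refine Finset.disjoint_left.2 fun x hx1 hx2 => ?_
          have := Finset.mem_powerset.1 hS hx2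
          exact (Finset.mem_compl.1 this) (hπ hx1)
        have hcard : (π ∪ S).card = π.card + S.card := Finset.card_union_of_disjoint hdisj
        have hle : (π ∪ S).card ≤ n := by
          have := Finset.card_le_univ (π ∪ S)
          simpa using this
        rw [sign_shift hle, hcard, ← pow_add]
        congr 1
        omega
      rw [Finset.sum_congr rfl this, ← Finset.mul_sum,
        Finset.sum_powerset_neg_one_pow_card_of_nonempty hcompl, mul_zero]
    · intro τ hτ
      have hτρ : τ ∩ ρ = π := (Finset.mem_filter.1 hτ).2
      exact Finset.mem_powerset.2 fun x hx => Finset.mem_compl.2 (Finset.mem_sdiff.1 hx).2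
    · intro S hS
      have hS' : S ⊆ ρᶜ := Finset.mem_powerset.1 hS
      refine Finset.mem_filter.2 ⟨Finset.mem_univ _, ?_⟩
      rw [Finset.union_inter_distrib_right, Finset.inter_eq_left.2 hπ]
      have : S ∩ ρ = ∅ := by
        refine Finset.eq_empty_of_forall_notMem fun x hx => ?_
        have := Finset.mem_inter.1 hx
        exact (Finset.mem_compl.1 (hS' this.1)) this.2
      rw [this, Finset.union_empty]
    · intro τ hτ
      have hτρ : τ ∩ ρ = π := (Finset.mem_filter.1 hτ).2
      rw [← hτρ]
      ext x
      simp only [Finset.mem_union, Finset.mem_inter, Finset.mem_sdiff]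
      tauto
    · intro S hS
      have hS' : S ⊆ ρᶜ := Finset.mem_powerset.1 hS
      ext x
      simp only [Finset.mem_sdiff, Finset.mem_union]
      constructor
      · rintro ⟨h1 | h1, h2⟩
        · exact absurd (hπ h1) h2
        · exact h1
      · intro hx
        exact ⟨Or.inr hx, fun hc => (Finset.mem_compl.1 (hS' hx)) hc⟩
    · intro τ hτ
      have hτρ : τ ∩ ρ = π := (Finset.mem_filter.1 hτ).2
      have huniq : π ∪ τ \ ρ = τ := by
        rw [← hτρ]
        ext x
        simp only [Finset.mem_union, Finset.mem_inter, Finset.mem_sdiff]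
        tauto
      rw [huniq]
  -- split off the `τ = univ` term
  have hsplit := Finset.sum_filter_add_sum_filter_not
    (Finset.univ.filter (fun τ : Finset (Fin n) => τ ∩ ρ = π))
    (fun τ => τ ≠ Finset.univ) (fun τ => ((-1 : ℤ) ^ (n - τ.card + 1)))
  have hsetEq : (Finset.univ.filter (fun τ : Finset (Fin n) => τ ∩ ρ = π)).filter
      (fun τ => τ ≠ Finset.univ)
      = (Finset.univ.filter (fun τ : Finset (Fin n) => τ ≠ Finset.univ)).filter
        (fun τ => τ ∩ ρ = π) := by
    rw [Finset.filter_filter, Finset.filter_filter]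
    exact Finset.filter_congr (by intro τ _; tauto)
  by_cases hπρ : π = ρ
  · have hmem : (Finset.univ.filter (fun τ : Finset (Fin n) => τ ∩ ρ = π)).filter
        (fun τ => ¬τ ≠ Finset.univ) = {Finset.univ} := by
      ext τ
      simp only [Finset.mem_filter, Finset.mem_univ, true_and, not_not, Finset.mem_singleton]
      constructor
      · rintro ⟨_, h⟩; exact h
      · rintro rfl
        exact ⟨by rw [Finset.univ_inter, hπρ], rfl⟩
    rw [hmem, Finset.sum_singleton, hsetEq] at hsplit
    have hcard : (Finset.univ : Finset (Fin n)).card = n := by simp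
    rw [hcard, Nat.sub_self, pow_one, hfull] at hsplit
    rw [if_pos hπρ]
    linarith
  · have hmem : (Finset.univ.filter (fun τ : Finset (Fin n) => τ ∩ ρ = π)).filter
        (fun τ => ¬τ ≠ Finset.univ) = ∅ := by
      ext τ
      simp only [Finset.mem_filter, Finset.mem_univ, true_and, not_not,
        Finset.notMem_empty, iff_false]
      rintro ⟨h1, rfl⟩
      rw [Finset.univ_inter] at h1
      exact hπρ h1.symm
    rw [hmem, Finset.sum_empty, add_zero, hsetEq] at hsplit
    rw [hsplit, hfull, if_neg hπρ]

/-- **Flabbiness of the sheaf `𝒜` on a smooth cone** (Lemma `Afiacco` of the paper):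
the restriction `𝒜_σ = ℤ[M] → 𝒜(∂σ)` is surjective — explicitly, every compatible
family `(a_τ)_{τ ⊊ σ}` of sections on the proper faces is the restriction of the element
`a = Σ_{τ ⊊ σ} (−1)^{n − dim τ + 1} φ_τ(a_τ)` of `ℤ[M]`. -/
theorem stmt16 (a : ∀ τ : Finset (Fin n), AddMonoidAlgebra ℤ ({x // x ∈ τ} → ℤ))
    (hcompat : ∀ (τ₁ τ₂ : Finset (Fin n)) (h : τ₁ ⊆ τ₂), τ₂ ≠ Finset.univ →
      resRing h (a τ₂) = a τ₁) :
    ∀ ρ : Finset (Fin n), ρ ≠ Finset.univ →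
      resFull ρ (∑ τ ∈ Finset.univ.filter (fun τ : Finset (Fin n) => τ ≠ Finset.univ),
        ((-1 : ℤ) ^ (n - τ.card + 1)) • phiSec τ (a τ)) = a ρ := by
  classical
  intro ρ hρ
  set B : Finset (Fin n) → AddMonoidAlgebra ℤ ({x // x ∈ ρ} → ℤ) :=
    fun π => AddMonoidAlgebra.mapDomainRingHom ℤ (extInto ρ π) (a π) with hB
  have step1 : resFull ρ (∑ τ ∈ Finset.univ.filter (fun τ : Finset (Fin n) => τ ≠ Finset.univ),
        ((-1 : ℤ) ^ (n - τ.card + 1)) • phiSec τ (a τ))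
      = ∑ τ ∈ Finset.univ.filter (fun τ : Finset (Fin n) => τ ≠ Finset.univ),
        ((-1 : ℤ) ^ (n - τ.card + 1)) • B (τ ∩ ρ) := by
    rw [map_sum]
    refine Finset.sum_congr rfl fun τ hτ => ?_
    have hτu : τ ≠ Finset.univ := (Finset.mem_filter.1 hτ).2
    rw [map_zsmul]
    congr 1
    rw [resFull_phiSec]
    have : AddMonoidAlgebra.mapDomainRingHom ℤ (extInto ρ τ) (a τ)
        = AddMonoidAlgebra.mapDomainRingHom ℤ (extInto ρ (τ ∩ ρ))
          (resRing (Finset.inter_subset_left (s₂ := ρ)) (a τ)) := by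
      show AddMonoidAlgebra.mapDomain (⇑(extInto ρ τ)) (a τ)
          = AddMonoidAlgebra.mapDomain (⇑(extInto ρ (τ ∩ ρ)))
            (AddMonoidAlgebra.mapDomain (⇑(resAdd (Finset.inter_subset_left (s₂ := ρ)))) (a τ))
      simp only [AddMonoidAlgebra.mapDomain]
      rw [← Finsupp.mapDomain_comp, ← extInto_factor]
    rw [this, hcompat _ _ _ hτu, hB]
  rw [step1]
  have step2 : ∑ τ ∈ Finset.univ.filter (fun τ : Finset (Fin n) => τ ≠ Finset.univ),
        ((-1 : ℤ) ^ (n - τ.card + 1)) • B (τ ∩ ρ)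
      = ∑ π ∈ ρ.powerset, ∑ τ ∈ (Finset.univ.filter
          (fun τ : Finset (Fin n) => τ ≠ Finset.univ)).filter (fun τ => τ ∩ ρ = π),
          ((-1 : ℤ) ^ (n - τ.card + 1)) • B (τ ∩ ρ) := by
    rw [Finset.sum_fiberwise_of_maps_to (g := fun τ => τ ∩ ρ)
      (fun τ _ => Finset.mem_powerset.2 Finset.inter_subset_right)]
  rw [step2]
  have step3 : ∀ π ∈ ρ.powerset,
      (∑ τ ∈ (Finset.univ.filter
          (fun τ : Finset (Fin n) => τ ≠ Finset.univ)).filter (fun τ => τ ∩ ρ = π),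
          ((-1 : ℤ) ^ (n - τ.card + 1)) • B (τ ∩ ρ))
        = (if π = ρ then 1 else 0 : ℤ) • B π := by
    intro π hπ
    rw [← sign_count ρ π hρ (Finset.mem_powerset.1 hπ), Finset.sum_smul]
    refine Finset.sum_congr rfl fun τ hτ => ?_
    rw [(Finset.mem_filter.1 hτ).2]
  rw [Finset.sum_congr rfl step3]
  have step4 : ∑ π ∈ ρ.powerset, (if π = ρ then 1 else 0 : ℤ) • B π = B ρ := by
    have h1 : ∀ π ∈ ρ.powerset, (if π = ρ then 1 else 0 : ℤ) • B π
        = if π = ρ then B π else 0 := by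
      intro π _
      split <;> simp
    rw [Finset.sum_congr rfl h1, Finset.sum_ite_eq' ρ.powerset ρ B,
      if_pos (Finset.mem_powerset.2 (subset_refl ρ))]
  rw [step4]
  exact mapDomain_extInto_self ρ (a ρ)

end
end
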